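/- Let φ : ℝᵈ → ℝ be twice continuously differentiable, σ a constant, ε > 0, W ∈ C¹, and define μ = -∇·(K ε σ ∇φ) + (K/ε) σ W'(φ) + Σᵢ ξᵢ'(φ)(Gᵢ(cᵢ) - Gᵢ'(cᵢ)cᵢ) for constants cᵢ and C¹ functions ξᵢ, Gᵢ. Then the identity μ ∇φ = ∇·( K σ ( ((ε/2)|∇φ|² + W(φ)/ε) I - ε ∇φ ⊗ ∇φ ) ) + Σᵢ ξᵢ'(φ)(Gᵢ(cᵢ) - Gᵢ'(cᵢ)cᵢ) ∇φ holds pointwise, where I is the identity matrix and ∇· of a matrix field is the row-wise divergence. -/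

import Mathlib

/-!
Write the capillary stress as `Kσ (ε (½|∇φ|² I - ∇φ ⊗ ∇φ) + ε⁻¹ W(φ) I)`. The divergence
of `W(φ) I` is `W'(φ) ∇φ`. In the divergence of the Korteweg tensor `½|∇φ|² I - ∇φ ⊗ ∇φ`, the
two Hessian terms `∑ₖ ∂ₖφ ∂ᵢ∂ₖφ` and `∑ⱼ ∂ⱼφ ∂ⱼ∂ᵢφ` cancel by the symmetry of second
derivatives, leaving `-Δφ ∇φ`. The remaining terms of `μ ∇φ` match these two contributions term by term.
-/

open Finset

variable {ι : Type*} [DecidableEq ι]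

noncomputable def partialDeriv (j : ι) (f : (ι → ℝ) → ℝ) (x : ι → ℝ) : ℝ :=
  fderiv ℝ f x (Pi.single j 1)

lemma partialDeriv_mul_ite {f : (ι → ℝ) → ℝ} {x : ι → ℝ} (i j : ι) :
    partialDeriv j (fun y => f y * if i = j then 1 else 0) x =
      if i = j then partialDeriv i f x else 0 := by
  split_ifs with h
  · subst h; simp
  · simp [partialDeriv]

section Rules

variable [Fintype ι] {f g : (ι → ℝ) → ℝ} {x : ι → ℝ} (j : ι)

lemma partialDeriv_add (hf : DifferentiableAt ℝ f x) (hg : DifferentiableAt ℝ g x) :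
    partialDeriv j (fun y => f y + g y) x = partialDeriv j f x + partialDeriv j g x := by
  simp [partialDeriv, fderiv_fun_add hf hg]

lemma partialDeriv_sub (hf : DifferentiableAt ℝ f x) (hg : DifferentiableAt ℝ g x) :
    partialDeriv j (fun y => f y - g y) x = partialDeriv j f x - partialDeriv j g x := by
  simp [partialDeriv, fderiv_fun_sub hf hg]

lemma partialDeriv_mul (hf : DifferentiableAt ℝ f x) (hg : DifferentiableAt ℝ g x) :
    partialDeriv j (fun y => f y * g y) x =
      f x * partialDeriv j g x + g x * partialDeriv j f x := by
  simp [partialDeriv, fderiv_fun_mul hf hg]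

lemma partialDeriv_const_mul (c : ℝ) :
    partialDeriv j (fun y => c * f y) x = c * partialDeriv j f x := by
  simp [partialDeriv, ← smul_eq_mul, ← Pi.smul_def, fderiv_const_smul_field]

lemma partialDeriv_comp {W : ℝ → ℝ} (hW : DifferentiableAt ℝ W (f x))
    (hf : DifferentiableAt ℝ f x) :
    partialDeriv j (fun y => W (f y)) x = deriv W (f x) * partialDeriv j f x := by
  simp [partialDeriv, fderiv_fun_comp x hW hf, mul_comm]

lemma partialDeriv_sum {κ : Type*} (s : Finset κ) {F : κ → (ι → ℝ) → ℝ}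
    (hF : ∀ k ∈ s, DifferentiableAt ℝ (F k) x) :
    partialDeriv j (fun y => ∑ k ∈ s, F k y) x = ∑ k ∈ s, partialDeriv j (F k) x := by
  simp [partialDeriv, fderiv_fun_sum hF]

end Rules

section SecondOrder

variable [Fintype ι] {φ : (ι → ℝ) → ℝ}

theorem ContDiff.differentiable_partialDeriv (hφ : ContDiff ℝ 2 φ) (j : ι) :
    Differentiable ℝ (partialDeriv j φ) := fun x =>
  ((hφ.fderiv_right le_rfl).differentiable one_ne_zero x).clm_apply (differentiableAt_const _)

theorem ContDiff.partialDeriv_comm (hφ : ContDiff ℝ 2 φ) (j k : ι) (x : ι → ℝ) :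
    partialDeriv k (partialDeriv j φ) x = partialDeriv j (partialDeriv k φ) x := by
  have hφ' := (hφ.fderiv_right le_rfl).differentiable one_ne_zero x
  have h := (hφ.contDiffAt (x := x)).isSymmSndFDerivAt (by simp)
  unfold partialDeriv
  rw [fderiv_clm_apply hφ' (differentiableAt_const _),
    fderiv_clm_apply hφ' (differentiableAt_const _)]
  simp [h.eq]

theorem partialDeriv_half_sum_sq {x : ι → ℝ} (h : ∀ k, DifferentiableAt ℝ (partialDeriv k φ) x)
    (i : ι) :
    partialDeriv i (fun y => (∑ k, partialDeriv k φ y ^ 2) / 2) x =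
      ∑ k, partialDeriv k φ x * partialDeriv i (partialDeriv k φ) x := by
  simp_rw [div_eq_inv_mul, partialDeriv_const_mul, sq]
  rw [partialDeriv_sum (F := fun k y => partialDeriv k φ y * partialDeriv k φ y) _ _
    fun k _ => (h k).fun_mul (h k)]
  simp only [partialDeriv_mul _ (h _) (h _)]
  rw [mul_sum]
  exact sum_congr rfl fun k _ => by ring

theorem ContDiff.sum_partialDeriv_korteweg (hφ : ContDiff ℝ 2 φ) (i : ι) (x : ι → ℝ) :
    ∑ j, partialDeriv j (fun y => (∑ k, partialDeriv k φ y ^ 2) / 2 * (if i = j then 1 else 0)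
        - partialDeriv i φ y * partialDeriv j φ y) x =
      -(∑ j, partialDeriv j (partialDeriv j φ) x) * partialDeriv i φ x := by
  have hd := hφ.differentiable_partialDeriv
  calc _ = ∑ j, ((if i = j then partialDeriv i (fun y => (∑ k, partialDeriv k φ y ^ 2) / 2) x
          else 0) - (partialDeriv i φ x * partialDeriv j (partialDeriv j φ) x
          + partialDeriv j φ x * partialDeriv j (partialDeriv i φ) x)) := by
        refine sum_congr rfl fun j _ => ?_
        rw [partialDeriv_sub _ (by fun_prop) (by fun_prop), partialDeriv_mul_ite,
          partialDeriv_mul _ (hd i x) (hd j x)]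
    _ = _ := by
        rw [sum_sub_distrib, sum_ite_eq, if_pos (mem_univ _),
          partialDeriv_half_sum_sq fun k => hd k x, sum_add_distrib, ← mul_sum]
        simp only [hφ.partialDeriv_comm i]
        ring

theorem ContDiff.sum_partialDeriv_capillaryStress (hφ : ContDiff ℝ 2 φ) {W : ℝ → ℝ} {x : ι → ℝ}
    (hW : DifferentiableAt ℝ W (φ x)) (K σ ε : ℝ) (i : ι) :
    ∑ j, partialDeriv j (fun y => K * σ * (((ε / 2) * (∑ k, partialDeriv k φ y ^ 2) + W (φ y) / ε)
        * (if i = j then 1 else 0) - ε * partialDeriv i φ y * partialDeriv j φ y)) x =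
      K * σ * (deriv W (φ x) / ε - ε * ∑ j, partialDeriv j (partialDeriv j φ) x)
        * partialDeriv i φ x := by
  have hd := hφ.differentiable_partialDeriv
  have hφ' : Differentiable ℝ φ := hφ.differentiable two_ne_zero
  calc _ = ∑ j, K * σ * (ε * partialDeriv j (fun y => (∑ k, partialDeriv k φ y ^ 2) / 2
          * (if i = j then 1 else 0) - partialDeriv i φ y * partialDeriv j φ y) x
        + partialDeriv j (fun y => ε⁻¹ * W (φ y) * if i = j then 1 else 0) x) := by
        refine sum_congr rfl fun j _ => ?_
        rw [← partialDeriv_const_mul, ← partialDeriv_add _ (by fun_prop) (by fun_prop),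
          ← partialDeriv_const_mul]
        congr 1
        ext y
        ring
    _ = K * σ * (ε * (-(∑ j, partialDeriv j (partialDeriv j φ) x) * partialDeriv i φ x)
        + ε⁻¹ * (deriv W (φ x) * partialDeriv i φ x)) := by
        rw [← mul_sum, sum_add_distrib, ← mul_sum, hφ.sum_partialDeriv_korteweg]
        simp only [partialDeriv_mul_ite, sum_ite_eq, mem_univ, if_true]
        rw [partialDeriv_const_mul, partialDeriv_comp _ hW (hφ' x)]
    _ = _ := by ring

end SecondOrder

theorem capillary_stress_reformulation_general
    (d : ℕ) (σ ε K : ℝ)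
    (φ : (Fin d → ℝ) → ℝ) (hφ : ContDiff ℝ 2 φ)
    (W ξ₁ ξ₂ G₁ G₂ : ℝ → ℝ)
    (hW : ContDiff ℝ 1 W)
    (c₁ c₂ : ℝ)
    (pd : Fin d → ((Fin d → ℝ) → ℝ) → (Fin d → ℝ) → ℝ)
    (hpd : pd = fun j f x => fderiv ℝ f x (Pi.single j 1))
    (δGL : (Fin d → ℝ) → ℝ)
    (hδGL : δGL = fun x => (ε/2) * (∑ j, (pd j φ x)^2) + W (φ x) / ε)
    (μ : (Fin d → ℝ) → ℝ)
    (hμ : μ = fun x =>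
      -(∑ j, pd j (fun y => K * ε * σ * pd j φ y) x)
      + (K/ε) * σ * deriv W (φ x)
      + (deriv ξ₁ (φ x) * (G₁ c₁ - deriv G₁ c₁ * c₁)
         + deriv ξ₂ (φ x) * (G₂ c₂ - deriv G₂ c₂ * c₂)))
    (T : (Fin d → ℝ) → Fin d → Fin d → ℝ)
    (hT : T = fun x i j =>
      K * σ * (δGL x * (if i = j then (1:ℝ) else 0) - ε * pd i φ x * pd j φ x)) :
    ∀ (x : Fin d → ℝ) (i : Fin d),
      μ x * pd i φ x =
        (∑ j, pd j (fun y => T y i j) x)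
        + (deriv ξ₁ (φ x) * (G₁ c₁ - deriv G₁ c₁ * c₁)
           + deriv ξ₂ (φ x) * (G₂ c₂ - deriv G₂ c₂ * c₂)) * pd i φ x := by
  obtain rfl : pd = partialDeriv := hpd
  subst hδGL hμ hT
  intro x i
  rw [hφ.sum_partialDeriv_capillaryStress (hW.differentiable one_ne_zero (φ x))]
  simp only [partialDeriv_const_mul, ← mul_sum]
  ring

theorem capillary_stress_reformulation
    (d : ℕ) (σ ε K : ℝ) (hε : 0 < ε) (hK : 0 < K)
    (φ : (Fin d → ℝ) → ℝ) (hφ : ContDiff ℝ 2 φ)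
    (W ξ₁ ξ₂ G₁ G₂ : ℝ → ℝ)
    (hW : ContDiff ℝ 1 W) (hξ₁ : ContDiff ℝ 1 ξ₁) (hξ₂ : ContDiff ℝ 1 ξ₂)
    (hG₁ : ContDiff ℝ 1 G₁) (hG₂ : ContDiff ℝ 1 G₂)
    (c₁ c₂ : ℝ)
    (pd : Fin d → ((Fin d → ℝ) → ℝ) → (Fin d → ℝ) → ℝ)
    (hpd : pd = fun j f x => fderiv ℝ f x (Pi.single j 1))
    (δGL : (Fin d → ℝ) → ℝ)
    (hδGL : δGL = fun x => (ε/2) * (∑ j, (pd j φ x)^2) + W (φ x) / ε)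
    (μ : (Fin d → ℝ) → ℝ)
    (hμ : μ = fun x =>
      -(∑ j, pd j (fun y => K * ε * σ * pd j φ y) x)
      + (K/ε) * σ * deriv W (φ x)
      + (deriv ξ₁ (φ x) * (G₁ c₁ - deriv G₁ c₁ * c₁)
         + deriv ξ₂ (φ x) * (G₂ c₂ - deriv G₂ c₂ * c₂)))
    (T : (Fin d → ℝ) → Fin d → Fin d → ℝ)
    (hT : T = fun x i j =>
      K * σ * (δGL x * (if i = j then (1:ℝ) else 0) - ε * pd i φ x * pd j φ x)) :
    ∀ (x : Fin d → ℝ) (i : Fin d),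
      μ x * pd i φ x =
        (∑ j, pd j (fun y => T y i j) x)
        + (deriv ξ₁ (φ x) * (G₁ c₁ - deriv G₁ c₁ * c₁)
           + deriv ξ₂ (φ x) * (G₂ c₂ - deriv G₂ c₂ * c₂)) * pd i φ x :=
  capillary_stress_reformulation_general d σ ε K φ hφ W ξ₁ ξ₂ G₁ G₂ hW c₁ c₂ pd hpd δGL hδGL μ hμ T
    hT
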